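/- Let I, J ⊆ S, let b be a word on S such that pr(b) is I-reduced-J, and let b' be a word all of whose letters lie in J × {±1}. Set J₁ := {u ∈ J : pr(b) u pr(b)⁻¹ ∈ I}. Then π̂_I(b·b') = π̂_I(b) · ψ(π̂_{J₁}(b')), where ψ replaces each letter (u, ε) by (pr(b) u pr(b)⁻¹, ε) (each such pr(b) u pr(b)⁻¹ lies in I). -/

import Mathlib

open scoped Classical

namespace DGM

variable {S : Type*} {W : Type*} [Group W] {M : CoxeterMatrix S}

/-- The standard parabolic subgroup `W_I` of `W`, generated by the simple
reflections indexed by `I ⊆ S`. -/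
def WP (cs : CoxeterSystem M W) (I : Set S) : Subgroup W :=
  Subgroup.closure (cs.simple '' I)

/-- `w` is `I`-reduced: `ℓ(sw) > ℓ(w)` for every `s ∈ I`. -/
def IsLeftReduced (cs : CoxeterSystem M W) (I : Set S) (w : W) : Prop :=
  ∀ s ∈ I, cs.length w < cs.length (cs.simple s * w)

/-- `w` is reduced-`J`: `ℓ(ws) > ℓ(w)` for every `s ∈ J`. -/
def IsRightReduced (cs : CoxeterSystem M W) (J : Set S) (w : W) : Prop :=
  ∀ s ∈ J, cs.length w < cs.length (w * cs.simple s)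

/-- `t_I(w)`: the unique element of minimal length of the coset `W_I w`. -/
noncomputable def tP (cs : CoxeterSystem M W) (I : Set S) (w : W) : W :=
  Classical.epsilon (fun v =>
    (∃ u ∈ WP cs I, v = u * w) ∧
      ∀ v', (∃ u ∈ WP cs I, v' = u * w) → cs.length v ≤ cs.length v')

/-- `pr` of a word on `S × {±1}` : the product in `W` of its letters. -/
def prW (cs : CoxeterSystem M W) (b : List (S × Bool)) : W :=
  cs.wordProd (b.map Prod.fst)

/-- Auxiliary function for the retraction; the accumulator `w` is the image in `W`
of the prefix already read (i.e. `w_{j-1}`).  A letter `(s, ε)` is kept (as the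
element `i ∈ I` with `simple i = t_I(w_{j-1}) · s · t_I(w_{j-1})⁻¹`, with the sign `ε`)
exactly when the index is good, i.e. when this conjugate lies in `I`. -/
noncomputable def retrAux (cs : CoxeterSystem M W) (I : Set S) :
    W → List (S × Bool) → List (S × Bool)
  | _, [] => []
  | w, p :: rest =>
    (if h : ∃ i ∈ I, cs.simple i = tP cs I w * cs.simple p.1 * (tP cs I w)⁻¹ then
        [(h.choose, p.2)]
      else []) ++ retrAux cs I (w * cs.simple p.1) rest

/-- The retraction `π̂_I` of a word on `S × {±1}`; its letters lie in `I × {±1}`. -/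
noncomputable def retr (cs : CoxeterSystem M W) (I : Set S) (b : List (S × Bool)) :
    List (S × Bool) :=
  retrAux cs I 1 b

/-- The map `φ_w` applied letterwise to a word: each letter `u` is replaced by the
element of `S` whose simple reflection is `w · u · w⁻¹` (the sign is kept). -/
noncomputable def phiW (cs : CoxeterSystem M W) (w : W) (b : List (S × Bool)) :
    List (S × Bool) :=
  b.map (fun p =>
    (@Classical.epsilon S ⟨p.1⟩ (fun i : S => cs.simple i = w * cs.simple p.1 * w⁻¹), p.2))

/-!
Write `w = pr(b)`. The key fact is `t_I(w v) = w · t_{J₁}(v)` for `v ∈ W_J`. The right-hand side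
lies in `W_I w v` because `w` conjugates `W_{J₁}` into `W_I`, and it is `I`-reduced: by the strong
exchange condition applied to the length-additive product `w · t_{J₁}(v)`, an `I`-descent would
produce some `x ∈ W_J` with `w x w⁻¹` simple, and such an `x` is a simple reflection `s_u` with
`u ∈ J₁`, contradicting `J₁`-reducedness of `t_{J₁}(v)`. Consequently, while `b'` is read after `b`,
an index is good for `I` exactly when it is good for `J₁` in `b'`, and the letters kept correspond
under conjugation by `w`.

The strong exchange condition comes from the reflection cocycle: lifting `s_i ↦ (δ_{s_i}, s_i)` to
`(W → ℤ/2) ⋊ W` shows that the parity of the number of occurrences of `t` in the left inversion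
sequence of a word depends only on its product. Injectivity of `i ↦ s_i`, needed to identify the
letters kept, comes from the geometric representation.
-/

noncomputable section

namespace GeometricRepresentation

open Real

variable {S : Type*} (M : CoxeterMatrix S)

-- `M a b = 0` encodes `m_ab = ∞`; then `π / 0 = 0` gives the usual value `-1`.
def cosForm : (S →₀ ℝ) →ₗ[ℝ] (S →₀ ℝ) →ₗ[ℝ] ℝ :=
  Finsupp.lift _ ℝ S fun a => Finsupp.lift ℝ ℝ S fun b => -cos (π / M a b)

lemma cosForm_single (a b : S) :
    cosForm M (Finsupp.single a 1) (Finsupp.single b 1) = -cos (π / M a b) := by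
  simp [cosForm]

lemma cosForm_single_self (a : S) :
    cosForm M (Finsupp.single a 1) (Finsupp.single a 1) = 1 := by
  simp [cosForm_single]

lemma cosForm_single_comm (a b : S) :
    cosForm M (Finsupp.single b 1) (Finsupp.single a 1) =
      cosForm M (Finsupp.single a 1) (Finsupp.single b 1) := by
  simp only [cosForm_single, M.symmetric a b]

def sigma (a : S) : Module.End ℝ (S →₀ ℝ) :=
  LinearMap.id - ((cosForm M).flip (Finsupp.single a 1)).smulRight ((2 : ℝ) • Finsupp.single a 1)

lemma sigma_apply (a : S) (v : S →₀ ℝ) :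
    sigma M a v = v - (2 * cosForm M v (Finsupp.single a 1)) • Finsupp.single a 1 := by
  simp [sigma, mul_comm]

lemma sigma_mul_self (a : S) : sigma M a * sigma M a = 1 := by
  refine LinearMap.ext fun v => ?_
  simp only [Module.End.mul_apply, Module.End.one_apply, sigma_apply, map_sub, map_smul,
    cosForm_single_self]
  module

variable {M}

lemma sin_smul_pow_sigma_mul_sigma_apply {a b : S} {θ : ℝ}
    (hθ : cosForm M (Finsupp.single a 1) (Finsupp.single b 1) = -cos θ) (k : ℕ) :
    sin θ • ((sigma M a * sigma M b) ^ k) (Finsupp.single a 1) =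
        sin (2 * k * θ + θ) • Finsupp.single a 1 + sin (2 * k * θ) • Finsupp.single b 1 ∧
      sin θ • ((sigma M a * sigma M b) ^ k) (Finsupp.single b 1) =
        -sin (2 * k * θ) • Finsupp.single a 1 - sin (2 * k * θ - θ) • Finsupp.single b 1 := by
  set A := sigma M a * sigma M b
  set c := cos θ
  set ea : S →₀ ℝ := Finsupp.single a 1
  set eb : S →₀ ℝ := Finsupp.single b 1
  have hab : cosForm M ea eb = -c := hθ
  have hba : cosForm M eb ea = -c := (cosForm_single_comm M a b).trans hab
  have hAa : A ea = (4 * c ^ 2 - 1) • ea + (2 * c) • eb := by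
    simp only [A, Module.End.mul_apply, sigma_apply, map_sub, map_smul,
      hab, hba, ea, eb, cosForm_single_self]
    module
  have hAb : A eb = (-(2 * c)) • ea - eb := by
    simp only [A, Module.End.mul_apply, sigma_apply, map_sub, map_smul,
      hba, ea, eb, cosForm_single_self]
    module
  have sin_add_two_mul (y : ℝ) :
      sin (y + 2 * θ) = (4 * c ^ 2 - 1) * sin y - 2 * c * sin (y - θ) := by
    simp only [Real.sin_add, Real.sin_sub, Real.sin_two_mul, Real.cos_two_mul]
    ring
  clear_value A
  induction k with
  | zero => simp [Real.sin_neg]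
  | succ k ih =>
    obtain ⟨iha, ihb⟩ := ih
    have hx : 2 * ((k + 1 : ℕ) : ℝ) * θ = 2 * k * θ + 2 * θ := by push_cast; ring
    set x := 2 * (k : ℝ) * θ
    have h1 : sin (x + 2 * θ + θ) = (4 * c ^ 2 - 1) * sin (x + θ) - 2 * c * sin x := by
      rw [show x + 2 * θ + θ = x + θ + 2 * θ by ring, sin_add_two_mul, add_sub_cancel_right]
    have h2 := sin_add_two_mul x
    have h3 : sin (x + 2 * θ) = 2 * c * sin (x + θ) - sin x := by
      simp only [Real.sin_add, Real.sin_two_mul, Real.cos_two_mul]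
      ring
    have h4 : sin (x + 2 * θ - θ) = 2 * c * sin x - sin (x - θ) := by
      rw [show x + 2 * θ - θ = x + θ by ring, Real.sin_add, Real.sin_sub]
      ring
    rw [hx, pow_succ, Module.End.mul_apply, Module.End.mul_apply, hAa, hAb]
    simp only [map_add, map_sub, map_smul, smul_add, smul_sub, smul_comm (sin θ), iha, ihb]
    constructor
    · rw [h1, h2]; module
    · rw [h3, h4]; module

lemma eq_one_of_fixes_single_of_fixes_orthogonal {a b : S}
    (hd : cosForm M (Finsupp.single a 1) (Finsupp.single b 1) ^ 2 ≠ 1)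
    {T : Module.End ℝ (S →₀ ℝ)} (ha : T (Finsupp.single a 1) = Finsupp.single a 1)
    (hb : T (Finsupp.single b 1) = Finsupp.single b 1)
    (horth : ∀ u, cosForm M u (Finsupp.single a 1) = 0 → cosForm M u (Finsupp.single b 1) = 0 →
      T u = u) :
    T = 1 := by
  refine LinearMap.ext fun v => ?_
  set ea : S →₀ ℝ := Finsupp.single a 1
  set eb : S →₀ ℝ := Finsupp.single b 1
  set d := cosForm M ea eb
  have hba : cosForm M eb ea = d := cosForm_single_comm M a b
  have haa : cosForm M ea ea = 1 := cosForm_single_self M a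
  have hbb : cosForm M eb eb = 1 := cosForm_single_self M b
  have hab : cosForm M ea eb = d := rfl
  have hd' : 1 - d ^ 2 ≠ 0 := sub_ne_zero.2 (Ne.symm hd)
  set x := (cosForm M v ea - d * cosForm M v eb) / (1 - d ^ 2)
  set y := (cosForm M v eb - d * cosForm M v ea) / (1 - d ^ 2)
  have hu : T (v - x • ea - y • eb) = v - x • ea - y • eb := by
    apply horth <;>
    · simp only [map_sub, map_smul, LinearMap.sub_apply, LinearMap.smul_apply, hab, hba,
        haa, hbb, smul_eq_mul, x, y]
      field_simp
      ring
  calc T v = T (x • ea + y • eb + (v - x • ea - y • eb)) := by congr 1; abel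
    _ = v := by rw [map_add, map_add, map_smul, map_smul, ha, hb, hu]; abel

lemma sigma_mul_sigma_pow {a b : S} (hab : a ≠ b) (h0 : M a b ≠ 0) :
    (sigma M a * sigma M b) ^ M a b = 1 := by
  set m := M a b
  set θ := π / m
  have hm : (2 : ℝ) ≤ m := by
    have := M.off_diagonal a b hab
    exact_mod_cast (show 2 ≤ m by omega)
  have hsin : sin θ ≠ 0 := by
    refine (Real.sin_pos_of_pos_of_lt_pi (by positivity) ?_).ne'
    exact div_lt_self Real.pi_pos (by linarith)
  have h2π : 2 * (m : ℝ) * θ = 2 * π := by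
    simp only [θ]
    field_simp
  obtain ⟨ha, hb⟩ := sin_smul_pow_sigma_mul_sigma_apply (θ := θ) (cosForm_single M a b) m
  rw [h2π, add_comm (2 * π), Real.sin_add_two_pi, Real.sin_two_pi, zero_smul,
    add_zero] at ha
  rw [h2π, Real.sin_two_pi_sub, Real.sin_two_pi, neg_zero, zero_smul, zero_sub, neg_smul,
    neg_neg] at hb
  refine eq_one_of_fixes_single_of_fixes_orthogonal (M := M) (a := a) (b := b) ?_
    (smul_right_injective _ hsin ha) (smul_right_injective _ hsin hb) fun u hua hub => ?_
  · rw [cosForm_single, neg_sq]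
    intro hcos
    have := Real.sin_sq_add_cos_sq θ
    exact hsin (pow_eq_zero_iff two_ne_zero |>.1 (by linarith))
  · have hAu : (sigma M a * sigma M b) u = u := by
      simp [sigma_apply, hua, hub]
    rw [Module.End.pow_apply, Function.iterate_fixed hAu]

lemma isLiftable_sigma : M.IsLiftable (sigma M) := by
  intro a b
  rcases eq_or_ne a b with rfl | hab
  · rw [M.diagonal, pow_one, sigma_mul_self]
  · rcases eq_or_ne (M a b) 0 with h0 | h0
    · rw [h0, pow_zero]
    · exact sigma_mul_sigma_pow hab h0

end GeometricRepresentation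

open GeometricRepresentation in
theorem simple_injective (cs : CoxeterSystem M W) : Function.Injective cs.simple := by
  intro a b hab
  by_contra hne
  have h := congrArg (fun w => cs.lift ⟨sigma M, isLiftable_sigma⟩ w (Finsupp.single a 1) a) hab
  simp [cs.lift_apply_simple, sigma_apply, cosForm_single_self, hne] at h

section ReflectionParity

def conjPrecomp (W : Type*) [Group W] : W →* MulAut (W → Multiplicative (ZMod 2)) where
  toFun u :=
    { toFun f t := f (u⁻¹ * t * u)
      invFun f t := f (u * t * u⁻¹)
      left_inv f := by simp [mul_assoc]
      right_inv f := by simp [mul_assoc]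
      map_mul' _ _ := rfl }
  map_one' := by ext; simp
  map_mul' u v := by ext; simp [MulAut.mul_apply, mul_assoc]

@[simp] lemma conjPrecomp_apply (u : W) (f : W → Multiplicative (ZMod 2)) (t : W) :
    conjPrecomp W u f t = f (u⁻¹ * t * u) := rfl

variable (cs : CoxeterSystem M W)

def parityGen (i : S) : (W → Multiplicative (ZMod 2)) ⋊[conjPrecomp W] W :=
  ⟨fun t => Multiplicative.ofAdd (if t = cs.simple i then 1 else 0), cs.simple i⟩

lemma prod_map_parityGen (ω : List S) :
    (ω.map (parityGen cs)).prod =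
      ⟨fun t => Multiplicative.ofAdd ((cs.leftInvSeq ω).count t : ZMod 2), cs.wordProd ω⟩ := by
  induction ω with
  | nil => rfl
  | cons i ω ih =>
    rw [List.map_cons, List.prod_cons, ih, parityGen, SemidirectProduct.mul_def]
    congr 1
    funext t
    have hcount : (List.map (MulAut.conj (cs.simple i)) (cs.leftInvSeq ω)).count t =
        (cs.leftInvSeq ω).count ((cs.simple i)⁻¹ * t * cs.simple i) := by
      conv_lhs => rw [show t = MulAut.conj (cs.simple i) ((cs.simple i)⁻¹ * t * cs.simple i) by
        simp [mul_assoc]]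
      exact List.count_map_of_injective _ _ (MulAut.conj _).injective _
    simp only [CoxeterSystem.leftInvSeq, List.count_cons, hcount, Pi.mul_apply, conjPrecomp_apply,
      ← ofAdd_add, beq_iff_eq, eq_comm (a := cs.simple i)]
    congr 1
    push_cast
    ring

lemma prod_map_alternatingWord_two_mul {G : Type*} [Monoid G] (f : S → G) (i j : S) (m : ℕ) :
    ((CoxeterSystem.alternatingWord i j (2 * m)).map f).prod = (f i * f j) ^ m := by
  induction m with
  | zero => simp [CoxeterSystem.alternatingWord]
  | succ m ih =>
    rw [show 2 * (m + 1) = 2 * m + 1 + 1 by ring]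
    simp [CoxeterSystem.alternatingWord, ih, pow_succ]

lemma wordProd_alternatingWord_add_two_mul (i j : S) (n : ℕ) :
    cs.wordProd (CoxeterSystem.alternatingWord i j (n + 2 * M i j)) =
      cs.wordProd (CoxeterSystem.alternatingWord i j n) := by
  rw [cs.prod_alternatingWord_eq_mul_pow, cs.prod_alternatingWord_eq_mul_pow,
    show (n + 2 * M i j) / 2 = n / 2 + M i j by omega, pow_add, cs.simple_mul_simple_pow,
    mul_one]
  simp [Nat.even_add]

lemma even_count_leftInvSeq_alternatingWord (i j : S) (t : W) :
    Even ((cs.leftInvSeq (CoxeterSystem.alternatingWord i j (2 * M i j))).count t) := by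
  set L := cs.leftInvSeq (CoxeterSystem.alternatingWord i j (2 * M i j))
  have hlen : L.length = 2 * M i j := by simp [L]
  have hperiodic : L.drop (M i j) = L.take (M i j) := by
    refine List.ext_getElem (by simp [hlen]; omega) fun k h₁ h₂ => ?_
    simp only [List.getElem_drop, List.getElem_take, L]
    rw [cs.getElem_leftInvSeq_alternatingWord _ _ _ _ (by simp at h₁; omega),
      cs.getElem_leftInvSeq_alternatingWord _ _ _ _ (by simp at h₂; omega),
      show 2 * (M i j + k) + 1 = 2 * k + 1 + 2 * M j i by rw [M.symmetric]; ring,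
      wordProd_alternatingWord_add_two_mul]
  rw [← List.take_append_drop (M i j) L, hperiodic, List.count_append]
  exact ⟨_, rfl⟩

lemma isLiftable_parityGen : M.IsLiftable (parityGen cs) := by
  intro i j
  rw [← prod_map_alternatingWord_two_mul, prod_map_parityGen]
  ext t
  · simp [(ZMod.natCast_eq_zero_iff_even).2 (even_count_leftInvSeq_alternatingWord cs i j t)]
  · simp [CoxeterSystem.wordProd, prod_map_alternatingWord_two_mul, cs.simple_mul_simple_pow]

def parityHom : W →* (W → Multiplicative (ZMod 2)) ⋊[conjPrecomp W] W :=
  cs.lift ⟨parityGen cs, isLiftable_parityGen cs⟩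

lemma parityHom_wordProd (ω : List S) :
    parityHom cs (cs.wordProd ω) =
      ⟨fun t => Multiplicative.ofAdd ((cs.leftInvSeq ω).count t : ZMod 2), cs.wordProd ω⟩ := by
  rw [← prod_map_parityGen, CoxeterSystem.wordProd, map_list_prod, List.map_map]
  congr 2
  exact funext fun i => cs.lift_apply_simple (isLiftable_parityGen cs) i

lemma parityHom_right (w : W) : (parityHom cs w).right = w := by
  obtain ⟨ω, rfl⟩ := cs.wordProd_surjective w
  rw [parityHom_wordProd]

def invParity (w t : W) : ZMod 2 := Multiplicative.toAdd ((parityHom cs w).left t)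

lemma invParity_wordProd (ω : List S) (t : W) :
    invParity cs (cs.wordProd ω) t = (cs.leftInvSeq ω).count t := by
  rw [invParity, parityHom_wordProd]
  rfl

lemma invParity_mul (u v t : W) :
    invParity cs (u * v) t = invParity cs u t + invParity cs v (u⁻¹ * t * u) := by
  rw [invParity, map_mul, SemidirectProduct.mul_left, parityHom_right]
  rfl

lemma invParity_one (t : W) : invParity cs 1 t = 0 := by
  simpa using invParity_wordProd cs [] t

lemma invParity_self_of_isReflection {t : W} (ht : cs.IsReflection t) : invParity cs t t = 1 := by
  obtain ⟨u, i, rfl⟩ := ht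
  set s := cs.simple i
  have hconj : u⁻¹ * (u * s * u⁻¹) * u = s := by group
  have hs : invParity cs s s = 1 := by simpa [s] using invParity_wordProd cs [i] s
  have hinv := invParity_mul cs u u⁻¹ (u * s * u⁻¹)
  rw [mul_inv_cancel, invParity_one, hconj] at hinv
  have hsplit := invParity_mul cs u (s * u⁻¹) (u * s * u⁻¹)
  rw [← mul_assoc u s u⁻¹, hconj, invParity_mul cs s u⁻¹ s, show s⁻¹ * s * s = s by group,
    hs] at hsplit
  rw [hsplit]
  linear_combination -hinv

lemma mem_leftInvSeq_of_invParity_ne_zero {ω : List S} {t : W}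
    (h : invParity cs (cs.wordProd ω) t ≠ 0) : t ∈ cs.leftInvSeq ω := by
  rw [invParity_wordProd] at h
  exact List.count_pos_iff.1 (Nat.pos_of_ne_zero fun h0 => h (by simp [h0]))

lemma invParity_eq_one_of_isLeftInversion {w t : W} (h : cs.IsLeftInversion w t) :
    invParity cs w t = 1 := by
  have hmul := invParity_mul cs t (t * w) t
  rw [← mul_assoc, h.1.mul_self, one_mul, invParity_self_of_isReflection cs h.1,
    show t⁻¹ * t * t = t by group] at hmul
  suffices invParity cs (t * w) t = 0 by rw [hmul, this, add_zero]
  by_contra hne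
  obtain ⟨ω, hω, hωw⟩ := cs.exists_isReduced (t * w)
  rw [hωw] at hne
  have hlt := (cs.isLeftInversion_of_mem_leftInvSeq hω
    (mem_leftInvSeq_of_invParity_ne_zero cs hne)).2
  rw [← hωw, ← mul_assoc, h.1.mul_self, one_mul] at hlt
  exact lt_asymm h.2 hlt

/-- The strong exchange condition. -/
theorem exists_eraseIdx_of_isLeftInversion {ω : List S} {t : W}
    (h : cs.IsLeftInversion (cs.wordProd ω) t) :
    ∃ j < ω.length, t * cs.wordProd ω = cs.wordProd (ω.eraseIdx j) := by
  have hne : invParity cs (cs.wordProd ω) t ≠ 0 := by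
    simp [invParity_eq_one_of_isLeftInversion cs h]
  obtain ⟨j, hj, rfl⟩ := List.getElem_of_mem (mem_leftInvSeq_of_invParity_ne_zero cs hne)
  refine ⟨j, by simpa using hj, ?_⟩
  rw [← List.getD_eq_getElem _ 1 hj, cs.getD_leftInvSeq_mul_wordProd]

end ReflectionParity

section Parabolic

variable (cs : CoxeterSystem M W) {I J : Set S}

lemma simple_mem_WP {i : S} (hi : i ∈ I) : cs.simple i ∈ WP cs I :=
  Subgroup.subset_closure ⟨i, hi, rfl⟩

lemma wordProd_mem_WP {ω : List S} (hω : ∀ i ∈ ω, i ∈ I) : cs.wordProd ω ∈ WP cs I :=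
  list_prod_mem fun _ hx => by
    obtain ⟨i, hi, rfl⟩ := List.mem_map.1 hx
    exact simple_mem_WP cs (hω i hi)

lemma length_wordProd_eraseIdx_lt {ω : List S} (hω : cs.IsReduced ω) {j : ℕ} (hj : j < ω.length) :
    cs.length (cs.wordProd (ω.eraseIdx j)) < cs.length (cs.wordProd ω) := by
  have := List.length_eraseIdx_add_one hj
  have := cs.length_wordProd_le (ω.eraseIdx j)
  rw [hω.eq]
  omega

lemma exists_reduced_word_simple_mul {i : S} (hi : i ∈ I) {ω : List S} (hωI : ∀ a ∈ ω, a ∈ I)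
    (hω : cs.IsReduced ω) :
    ∃ ω' : List S, (∀ a ∈ ω', a ∈ I) ∧ cs.IsReduced ω' ∧
      cs.wordProd ω' = cs.simple i * cs.wordProd ω := by
  rcases cs.length_simple_mul (cs.wordProd ω) i with hlen | hlen
  · refine ⟨i :: ω, ?_, ?_, cs.wordProd_cons i ω⟩
    · simpa [hi] using hωI
    · rw [CoxeterSystem.IsReduced, cs.wordProd_cons, hlen, hω.eq, List.length_cons]
  · obtain ⟨j, hj, hexch⟩ := exists_eraseIdx_of_isLeftInversion cs
      (⟨cs.isReflection_simple i, by omega⟩ : cs.IsLeftInversion (cs.wordProd ω) (cs.simple i))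
    refine ⟨ω.eraseIdx j, fun a ha => hωI a ((List.eraseIdx_sublist ω j).mem ha), ?_, hexch.symm⟩
    rw [CoxeterSystem.IsReduced, ← hexch, List.length_eraseIdx_of_lt hj, ← hω.eq]
    omega

lemma exists_reduced_word_of_mem_WP {w : W} (hw : w ∈ WP cs I) :
    ∃ ω : List S, (∀ a ∈ ω, a ∈ I) ∧ cs.IsReduced ω ∧ cs.wordProd ω = w := by
  induction hw using Subgroup.closure_induction_left with
  | one => exact ⟨[], by simp, by simp [CoxeterSystem.IsReduced], rfl⟩
  | mul_left x hx y _ ih =>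
    obtain ⟨i, hi, rfl⟩ := hx
    obtain ⟨ω, hωI, hω, rfl⟩ := ih
    exact exists_reduced_word_simple_mul cs hi hωI hω
  | inv_mul_cancel x hx y _ ih =>
    obtain ⟨i, hi, rfl⟩ := hx
    obtain ⟨ω, hωI, hω, rfl⟩ := ih
    rw [cs.inv_simple]
    exact exists_reduced_word_simple_mul cs hi hωI hω

lemma exchange_of_length_mul_eq_add {a b t : W}
    (hab : cs.length (a * b) = cs.length a + cs.length b) (ht : cs.IsLeftInversion (a * b) t)
    {ω : List S} (hω : cs.IsReduced ω) (hωb : cs.wordProd ω = b) :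
    cs.length (t * a) < cs.length a ∨
      ∃ j < ω.length, t * (a * b) = a * cs.wordProd (ω.eraseIdx j) := by
  obtain ⟨ωa, hωa, rfl⟩ := cs.exists_isReduced a
  subst hωb
  have hprod : cs.wordProd (ωa ++ ω) = cs.wordProd ωa * cs.wordProd ω := cs.wordProd_append ωa ω
  have hred : cs.IsReduced (ωa ++ ω) := by
    rw [CoxeterSystem.IsReduced, hprod, hab, hωa.eq, hω.eq, List.length_append]
  rw [← hprod] at ht ⊢
  obtain ⟨j, hj, hexch⟩ := exists_eraseIdx_of_isLeftInversion cs ht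
  rcases lt_or_ge j ωa.length with hj' | hj'
  · left
    rw [List.eraseIdx_append_of_lt_length hj', cs.wordProd_append, cs.wordProd_append,
      ← mul_assoc, mul_left_inj] at hexch
    rw [hexch]
    exact length_wordProd_eraseIdx_lt cs hωa hj'
  · right
    refine ⟨j - ωa.length, by simp at hj; omega, ?_⟩
    rw [hexch, List.eraseIdx_append_of_length_le hj', cs.wordProd_append]

lemma length_mul_of_forall_length_le {m : W} (hmin : ∀ u ∈ WP cs I, cs.length m ≤ cs.length (u * m))
    {u : W} (hu : u ∈ WP cs I) : cs.length (u * m) = cs.length u + cs.length m := by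
  obtain ⟨ωm, hωm, rfl⟩ := cs.exists_isReduced m
  obtain ⟨ω, hωI, hω, rfl⟩ := exists_reduced_word_of_mem_WP cs hu
  rw [hω.eq]
  clear hu
  induction ω with
  | nil => simp
  | cons i ω ih =>
    have hω' : cs.IsReduced ω := by simpa using hω.drop 1
    have hωI' : ∀ a ∈ ω, a ∈ I := fun a ha => hωI a (List.mem_cons_of_mem i ha)
    have ih := ih hωI' hω'
    rw [cs.wordProd_cons, mul_assoc, List.length_cons]
    rcases cs.length_simple_mul (cs.wordProd ω * cs.wordProd ωm) i with hlen | hlen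
    · omega
    exfalso
    rcases exchange_of_length_mul_eq_add cs (by rw [ih, hω'.eq])
      ⟨cs.isReflection_simple i, by omega⟩ hωm rfl with hdesc | ⟨j, hj, hexch⟩
    · have := hω.eq
      rw [cs.wordProd_cons, List.length_cons] at this
      have := hω'.eq
      omega
    · have hcoset : cs.wordProd (ωm.eraseIdx j) =
          ((cs.wordProd ω)⁻¹ * cs.simple i * cs.wordProd ω) * cs.wordProd ωm := by
        rw [mul_assoc, mul_assoc, hexch]
        group
      have := hmin _ (mul_mem (mul_mem (inv_mem (wordProd_mem_WP cs hωI'))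
        (simple_mem_WP cs (hωI i List.mem_cons_self))) (wordProd_mem_WP cs hωI'))
      rw [← hcoset] at this
      exact absurd (length_wordProd_eraseIdx_lt cs hωm hj) (not_lt.2 this)

lemma tP_spec (I : Set S) (w : W) :
    (∃ u ∈ WP cs I, tP cs I w = u * w) ∧
      ∀ v, (∃ u ∈ WP cs I, v = u * w) → cs.length (tP cs I w) ≤ cs.length v := by
  obtain ⟨v, hv, hmin⟩ := (measure cs.length).wf.has_min {v | ∃ u ∈ WP cs I, v = u * w}
    ⟨w, 1, one_mem _, (one_mul w).symm⟩
  have hex : ∃ v, (∃ u ∈ WP cs I, v = u * w) ∧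
      ∀ v', (∃ u ∈ WP cs I, v' = u * w) → cs.length v ≤ cs.length v' :=
    ⟨v, hv, fun v' hv' => not_lt.1 (hmin v' hv')⟩
  exact Classical.epsilon_spec hex

lemma tP_mul_inv_mem (I : Set S) (w : W) : tP cs I w * w⁻¹ ∈ WP cs I := by
  obtain ⟨u, hu, hw⟩ := (tP_spec cs I w).1
  rwa [hw, mul_inv_cancel_right]

lemma length_mul_tP {u : W} (hu : u ∈ WP cs I) (w : W) :
    cs.length (u * tP cs I w) = cs.length u + cs.length (tP cs I w) := by
  refine length_mul_of_forall_length_le cs (fun v hv => (tP_spec cs I w).2 _ ?_) hu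
  exact ⟨v * (tP cs I w * w⁻¹), mul_mem hv (tP_mul_inv_mem cs I w), by group⟩

lemma isLeftReduced_tP (I : Set S) (w : W) : IsLeftReduced cs I (tP cs I w) := fun i hi => by
  have := length_mul_tP cs (simple_mem_WP cs hi) w
  rw [cs.length_simple] at this
  omega

lemma tP_eq_self_of_isLeftReduced {m : W} (hm : IsLeftReduced cs I m) : tP cs I m = m := by
  obtain ⟨ω, hωI, hω, hωu⟩ := exists_reduced_word_of_mem_WP cs (inv_mem (tP_mul_inv_mem cs I m))
  have hm_eq : m = cs.wordProd ω * tP cs I m := by rw [hωu]; group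
  cases ω with
  | nil => simpa using hm_eq.symm
  | cons i ω =>
    exfalso
    have hωI' : ∀ a ∈ ω, a ∈ I := fun a ha => hωI a (List.mem_cons_of_mem i ha)
    have hω' : cs.IsReduced ω := by simpa using hω.drop 1
    have hlen_m : cs.length m = ω.length + 1 + cs.length (tP cs I m) := by
      conv_lhs => rw [hm_eq]
      rw [length_mul_tP cs (wordProd_mem_WP cs hωI), hω.eq, List.length_cons]
    have hlen_sm : cs.length (cs.simple i * m) = ω.length + cs.length (tP cs I m) := by
      conv_lhs => rw [hm_eq]
      rw [cs.wordProd_cons, mul_assoc, cs.simple_mul_simple_cancel_left,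
        length_mul_tP cs (wordProd_mem_WP cs hωI'), hω'.eq]
    have := hm i (hωI i List.mem_cons_self)
    omega

lemma length_mul_of_isLeftReduced {m : W} (hm : IsLeftReduced cs I m) {u : W} (hu : u ∈ WP cs I) :
    cs.length (u * m) = cs.length u + cs.length m := by
  rw [← tP_eq_self_of_isLeftReduced cs hm]
  exact length_mul_tP cs hu m

lemma tP_eq_of_isLeftReduced {m w : W} (hm : IsLeftReduced cs I m) (hmw : m * w⁻¹ ∈ WP cs I) :
    tP cs I w = m := by
  have hx : tP cs I w * m⁻¹ ∈ WP cs I := by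
    simpa [mul_assoc] using mul_mem (tP_mul_inv_mem cs I w) (inv_mem hmw)
  have h₁ := length_mul_of_isLeftReduced cs hm hx
  have h₂ := length_mul_of_isLeftReduced cs (isLeftReduced_tP cs I w) (inv_mem hx)
  simp only [mul_inv_rev, inv_inv, mul_assoc, inv_mul_cancel, mul_one] at h₁ h₂
  exact mul_inv_eq_one.1 (cs.length_eq_zero_iff.1 (by omega))

lemma isLeftReduced_inv_of_isRightReduced {w : W} (hw : IsRightReduced cs J w) :
    IsLeftReduced cs J w⁻¹ := fun i hi => by
  simpa [← cs.length_inv (w * cs.simple i)] using hw i hi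

lemma length_mul_of_isRightReduced {w : W} (hw : IsRightReduced cs J w) {x : W}
    (hx : x ∈ WP cs J) : cs.length (w * x) = cs.length w + cs.length x := by
  have := length_mul_of_isLeftReduced cs (isLeftReduced_inv_of_isRightReduced cs hw) (inv_mem hx)
  rw [← mul_inv_rev, cs.length_inv, cs.length_inv, cs.length_inv] at this
  omega

end Parabolic

section Retraction

variable (cs : CoxeterSystem M W) {I J : Set S}

/-- The set `J₁` of the paper. -/
def conjPreimage (I J : Set S) (w : W) : Set S :=
  {u | u ∈ J ∧ ∃ i ∈ I, cs.simple i = w * cs.simple u * w⁻¹}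

lemma conj_mem_WP_of_mem_WP_conjPreimage {w x : W} (hx : x ∈ WP cs (conjPreimage cs I J w)) :
    w * x * w⁻¹ ∈ WP cs I := by
  refine (Subgroup.closure_le ((WP cs I).comap (MulAut.conj w).toMonoidHom)).2 ?_ hx
  rintro _ ⟨u, ⟨-, i, hi, hiu⟩, rfl⟩
  simpa [← hiu] using simple_mem_WP cs hi

lemma WP_conjPreimage_le (I J : Set S) (w : W) : WP cs (conjPreimage cs I J w) ≤ WP cs J :=
  Subgroup.closure_mono (Set.image_mono fun _ hu => hu.1)

lemma tP_conjPreimage_mem_WP (w : W) {v : W} (hv : v ∈ WP cs J) :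
    tP cs (conjPreimage cs I J w) v ∈ WP cs J := by
  simpa using mul_mem (WP_conjPreimage_le cs I J w (tP_mul_inv_mem cs _ v)) hv

/-- Lengths add in `w x = s_i w`, so `ℓ(x) = 1`. -/
lemma exists_simple_of_conj_eq_simple {w x : W} (hw : IsRightReduced cs J w) (hx : x ∈ WP cs J)
    {i : S} (hconj : w * x * w⁻¹ = cs.simple i) : ∃ u ∈ J, x = cs.simple u := by
  have hlen := length_mul_of_isRightReduced cs hw hx
  rw [show w * x = cs.simple i * w by rw [← hconj]; group] at hlen
  have hx1 : cs.length x = 1 := by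
    rcases cs.length_simple_mul w i with h | h <;> omega
  obtain ⟨ω, hωJ, hω, rfl⟩ := exists_reduced_word_of_mem_WP cs hx
  rw [hω.eq] at hx1
  obtain ⟨u, rfl⟩ := List.length_eq_one_iff.1 hx1
  exact ⟨u, hωJ u (List.mem_singleton_self u), cs.wordProd_singleton u⟩

lemma isLeftReduced_mul {w v : W} (hwI : IsLeftReduced cs I w) (hwJ : IsRightReduced cs J w)
    (hv : v ∈ WP cs J) (hvJ₁ : IsLeftReduced cs (conjPreimage cs I J w) v) :
    IsLeftReduced cs I (w * v) := by
  intro i hi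
  refine lt_of_le_of_ne (not_lt.1 fun hlt => ?_) (cs.length_simple_mul_ne _ i).symm
  obtain ⟨ω, hωJ, hω, rfl⟩ := exists_reduced_word_of_mem_WP cs hv
  rcases exchange_of_length_mul_eq_add cs (length_mul_of_isRightReduced cs hwJ hv)
    ⟨cs.isReflection_simple i, hlt⟩ hω rfl with hdesc | ⟨j, hj, hexch⟩
  · exact lt_asymm hdesc (hwI i hi)
  set ρ := cs.wordProd (ω.eraseIdx j)
  have hρ : ρ ∈ WP cs J :=
    wordProd_mem_WP cs fun a ha => hωJ a ((List.eraseIdx_sublist ω j).mem ha)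
  obtain ⟨u, hu, hρu⟩ := exists_simple_of_conj_eq_simple cs hwJ
    (mul_mem hρ (inv_mem hv)) (i := i) (by rw [← mul_assoc, ← hexch]; group)
  have huJ₁ : u ∈ conjPreimage cs I J w := ⟨hu, i, hi, by rw [← hρu, ← mul_assoc, ← hexch]; group⟩
  have := hvJ₁ u huJ₁
  rw [← hρu, inv_mul_cancel_right] at this
  exact absurd (length_wordProd_eraseIdx_lt cs hω hj) (not_lt.2 this.le)

lemma tP_mul {w v : W} (hwI : IsLeftReduced cs I w) (hwJ : IsRightReduced cs J w)
    (hv : v ∈ WP cs J) : tP cs I (w * v) = w * tP cs (conjPreimage cs I J w) v := by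
  refine tP_eq_of_isLeftReduced cs
    (isLeftReduced_mul cs hwI hwJ (tP_conjPreimage_mem_WP cs w hv) (isLeftReduced_tP cs _ v)) ?_
  simpa [mul_assoc] using conj_mem_WP_of_mem_WP_conjPreimage cs (tP_mul_inv_mem cs _ v)

lemma retrAux_append (I : Set S) (x : W) (c c' : List (S × Bool)) :
    retrAux cs I x (c ++ c') = retrAux cs I x c ++ retrAux cs I (x * prW cs c) c' := by
  induction c generalizing x with
  | nil => simp [retrAux, prW]
  | cons p c ih => simp [retrAux, ih, prW, cs.wordProd_cons, mul_assoc]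

lemma retrAux_cons_of_simple_eq {x : W} {p : S × Bool} {c : List (S × Bool)} {i : S} (hi : i ∈ I)
    (hconj : cs.simple i = tP cs I x * cs.simple p.1 * (tP cs I x)⁻¹) :
    retrAux cs I x (p :: c) = (i, p.2) :: retrAux cs I (x * cs.simple p.1) c := by
  have h : ∃ i ∈ I, cs.simple i = tP cs I x * cs.simple p.1 * (tP cs I x)⁻¹ := ⟨i, hi, hconj⟩
  rw [retrAux, dif_pos h, simple_injective cs (h.choose_spec.2.trans hconj.symm)]
  rfl

lemma retrAux_cons_of_not_exists {x : W} {p : S × Bool} {c : List (S × Bool)}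
    (h : ¬∃ i ∈ I, cs.simple i = tP cs I x * cs.simple p.1 * (tP cs I x)⁻¹) :
    retrAux cs I x (p :: c) = retrAux cs I (x * cs.simple p.1) c := by
  rw [retrAux, dif_neg h, List.nil_append]

lemma phiW_cons_of_simple_eq {w : W} {u i : S} (hconj : cs.simple i = w * cs.simple u * w⁻¹)
    (ε : Bool) (l : List (S × Bool)) : phiW cs w ((u, ε) :: l) = (i, ε) :: phiW cs w l := by
  have hspec : cs.simple (@Classical.epsilon S ⟨u⟩ fun i' => cs.simple i' = w * cs.simple u * w⁻¹) =
      w * cs.simple u * w⁻¹ :=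
    Classical.epsilon_spec (p := fun i' => cs.simple i' = w * cs.simple u * w⁻¹) ⟨i, hconj⟩
  rw [phiW, List.map_cons, simple_injective cs (hspec.trans hconj.symm)]
  rfl

lemma retrAux_mul {w : W} (hwI : IsLeftReduced cs I w) (hwJ : IsRightReduced cs J w)
    {c : List (S × Bool)} (hc : ∀ p ∈ c, p.1 ∈ J) {v : W} (hv : v ∈ WP cs J) :
    retrAux cs I (w * v) c = phiW cs w (retrAux cs (conjPreimage cs I J w) v c) := by
  induction c generalizing v with
  | nil => rfl
  | cons p c ih =>
    have hp : p.1 ∈ J := hc p List.mem_cons_self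
    have htail :=
      ih (fun q hq => hc q (List.mem_cons_of_mem p hq)) (mul_mem hv (simple_mem_WP cs hp))
    rw [← mul_assoc] at htail
    have htP := tP_mul cs hwI hwJ hv
    set v₁ := tP cs (conjPreimage cs I J w) v
    by_cases hgood : ∃ u ∈ conjPreimage cs I J w, cs.simple u = v₁ * cs.simple p.1 * v₁⁻¹
    · obtain ⟨u, hu, hconj⟩ := hgood
      obtain ⟨i, hi, hiu⟩ := hu.2
      rw [retrAux_cons_of_simple_eq cs hu hconj, phiW_cons_of_simple_eq cs hiu,
        retrAux_cons_of_simple_eq cs hi (by rw [htP, hiu, hconj]; group), htail]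
    · rw [retrAux_cons_of_not_exists cs hgood, retrAux_cons_of_not_exists cs ?_, htail]
      rintro ⟨i, hi, hconj⟩
      have hv₁ : v₁ ∈ WP cs J := tP_conjPreimage_mem_WP cs w hv
      obtain ⟨u, hu, hxu⟩ := exists_simple_of_conj_eq_simple cs hwJ (i := i)
        (mul_mem (mul_mem hv₁ (simple_mem_WP cs hp)) (inv_mem hv₁))
        (by rw [hconj, htP]; group)
      exact hgood ⟨u, ⟨hu, i, hi, by rw [← hxu, hconj, htP]; group⟩, hxu.symm⟩

end Retraction

/-- If `pr(b)` is `I`-reduced-`J` and `b'` is a word on `J`, then, setting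
`J₁ := {u ∈ J : pr(b) u pr(b)⁻¹ ∈ I}`, one has
`π̂_I(b ++ b') = π̂_I(b) ++ ψ(π̂_{J₁}(b'))` where `ψ` replaces each letter `(u, ε)` by
`(pr(b) u pr(b)⁻¹, ε)`. -/
theorem retr_append_reduced (cs : CoxeterSystem M W) (I J : Set S)
    (b b' : List (S × Bool))
    (h1 : IsLeftReduced cs I (prW cs b)) (h2 : IsRightReduced cs J (prW cs b))
    (hb' : ∀ p ∈ b', p.1 ∈ J) :
    retr cs I (b ++ b') =
      retr cs I b ++ phiW cs (prW cs b)
        (retr cs {u | u ∈ J ∧ ∃ i ∈ I,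
            cs.simple i = prW cs b * cs.simple u * (prW cs b)⁻¹} b') := by
  have key := retrAux_mul cs h1 h2 hb' (one_mem (WP cs J))
  rw [mul_one] at key
  rw [retr, retrAux_append, one_mul, key]
  rfl

end

end DGM
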